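/- (Deterministic Cramér–Rao inequality) Let X be a finite set, Θ ⊆ ℝ^k open, and θ ↦ p_θ a continuously differentiable family of strictly positive probability distributions on X. Assume the Fisher information matrix G^{(e)}(θ), with entries g^{(e)}_{ij}(θ) := E_{p_θ}[∂_i log p_θ(X) ∂_j log p_θ(X)], is positive definite. If θ̂ : X → ℝ^k is an unbiased estimator of θ, i.e. E_{p_θ}[θ̂] = θ for all θ ∈ Θ, then Cov_{p_θ}[θ̂] ≽ (G^{(e)}(θ))^{-1} for every θ ∈ Θ. -/

import Mathlib

/-!
Write `W = diag p_θ`, `A` for the centered estimator `θ̂ - θ` and `S` for the score matrix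
`∂_i log p_θ`, both as `X × k` matrices. Then `Cov_θ[θ̂] = AᵀWA` and `G^{(e)}(θ) = SᵀWS`, while
differentiating `∑ p_θ = 1` and `E_θ[θ̂] = θ` gives `AᵀWS = 1`. So the positive semidefinite
Gram matrix `[A S]ᵀ W [A S]` is the block matrix `[[Cov, 1], [1, G]]`, and its Schur complement
`Cov - G⁻¹` is positive semidefinite.
-/

open scoped BigOperators Topology Matrix
open Real MeasureTheory

noncomputable section

/-- Expectation of `A` under the weight/distribution `p` on a finite set. -/
def expct {X : Type*} [Fintype X] (p A : X → ℝ) : ℝ := ∑ x, p x * A x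

/-- Covariance of `A` and `B` under `p`. -/
def covf {X : Type*} [Fintype X] (p A B : X → ℝ) : ℝ :=
  (∑ x, p x * A x * B x) - (∑ x, p x * A x) * (∑ x, p x * B x)

/-- Variance of `A` under `p`: `E_p[(A - E_p A)^2]`. -/
def varE {X : Type*} [Fintype X] (p A : X → ℝ) : ℝ :=
  ∑ x, p x * (A x - expct p A) ^ 2

/-- The α-escort distribution of `p`. -/
def escort {X : Type*} [Fintype X] (α : ℝ) (p : X → ℝ) : X → ℝ :=
  fun x => p x ^ α / ∑ y, p y ^ α

/-- Partial derivative in the `i`-th coordinate direction. -/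
def pderiv {m : ℕ} (i : Fin m) (f : (Fin m → ℝ) → ℝ) (θ : Fin m → ℝ) : ℝ :=
  fderiv ℝ f θ (Pi.single i 1)

/-- Covariance matrix of a vector-valued map `A` under `p`. -/
def covMatrix {X : Type*} [Fintype X] {m : ℕ} (p : X → ℝ) (A : X → Fin m → ℝ) :
    Matrix (Fin m) (Fin m) ℝ :=
  Matrix.of fun i j => covf p (fun x => A x i) (fun x => A x j)

/-- The α-information matrix `G^{(α)}(θ)`. -/
def Galpha {X : Type*} [Fintype X] {m : ℕ} (α : ℝ) (p : (Fin m → ℝ) → X → ℝ)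
    (θ : Fin m → ℝ) : Matrix (Fin m) (Fin m) ℝ :=
  Matrix.of fun i j =>
    covf (escort α (p θ)) (fun x => pderiv i (fun t => Real.log (p t x)) θ)
      (fun x => pderiv j (fun t => Real.log (p t x)) θ)

/-- The I_α-divergence (relative α-entropy). -/
def Ialpha {X : Type*} [Fintype X] (α : ℝ) (p q : X → ℝ) : ℝ :=
  (1 / (1 - α)) * Real.log (∑ x, p x * q x ^ (α - 1))
    + (1 / α) * Real.log (∑ x, q x ^ α)
    - (1 / (α * (1 - α))) * Real.log (∑ x, p x ^ α)

/-- Generalized KL-divergence between positive measures on a finite set. -/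
def genKL {X : Type*} [Fintype X] (pt qt : X → ℝ) : ℝ :=
  ∑ x, pt x * Real.log (pt x / qt x) - ∑ x, pt x + ∑ x, qt x

/-- The Fisher information matrix `G^{(e)}(θ)`. -/
def GeMat {X : Type*} [Fintype X] {k : ℕ} (p : (Fin k → ℝ) → X → ℝ) (θ : Fin k → ℝ) :
    Matrix (Fin k) (Fin k) ℝ :=
  Matrix.of fun i j =>
    ∑ x, p θ x * pderiv i (fun t => Real.log (p t x)) θ * pderiv j (fun t => Real.log (p t x)) θ

/-- The prior matrix `J^λ(θ)` with entries `∂_i log λ · ∂_j log λ`. -/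
def Jmat {k : ℕ} (lam : (Fin k → ℝ) → ℝ) (θ : Fin k → ℝ) : Matrix (Fin k) (Fin k) ℝ :=
  Matrix.of fun i j =>
    pderiv i (fun t => Real.log (lam t)) θ * pderiv j (fun t => Real.log (lam t)) θ

/-- The generalized Fisher matrix `G^{(f,F)}(θ)` of the escort model. -/
def GFF {X : Type*} [Fintype X] {k : ℕ} (F : ℝ → ℝ) (p : (Fin k → ℝ) → X → ℝ)
    (θ : Fin k → ℝ) : Matrix (Fin k) (Fin k) ℝ :=
  Matrix.of fun i j =>
    ∑ x, F (p θ x) * pderiv i (fun t => Real.log (F (p t x))) θ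
      * pderiv j (fun t => Real.log (F (p t x))) θ

/-- The generalized f-divergence `D_f^{(F)}(p,q)`. -/
def genDiv {X : Type*} [Fintype X] (f F : ℝ → ℝ) (p q : X → ℝ) : ℝ :=
  (1 / deriv (deriv f) 1) * ∑ x, F (q x) * f (F (p x) / F (q x))

/-- The Bayesian I_α-divergence between `λ·p` and `μ·q`. -/
def IalphaB {X : Type*} [Fintype X] (α lam mu : ℝ) (p q : X → ℝ) : ℝ :=
  lam * Ialpha α p q + lam * Real.log (lam / mu) - lam + mu

/-- The open-simplex parametrization of distributions on a set with `d+1` points. -/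
def simplexFam (d : ℕ) (θ : Fin d → ℝ) : Fin (d + 1) → ℝ :=
  fun x => if h : (x : ℕ) < d then θ ⟨x, h⟩ else 1 - ∑ i, θ i

section PartialDerivatives

variable {m : ℕ} {f g : (Fin m → ℝ) → ℝ} {θ : Fin m → ℝ}

theorem Filter.EventuallyEq.pderiv_eq (h : f =ᶠ[𝓝 θ] g) (i : Fin m) :
    pderiv i f θ = pderiv i g θ := by
  rw [pderiv, pderiv, h.fderiv_eq]

theorem pderiv_const (i : Fin m) (c : ℝ) : pderiv i (fun _ => c) θ = 0 := by
  simp [pderiv]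

theorem pderiv_coord (i j : Fin m) :
    pderiv i (fun t => t j) θ = (Pi.single i (1 : ℝ) : Fin m → ℝ) j := by
  rw [pderiv, (hasFDerivAt_apply j θ).fderiv]
  rfl

theorem mul_pderiv_log (hf : DifferentiableAt ℝ f θ) (hf0 : f θ ≠ 0) (i : Fin m) :
    f θ * pderiv i (fun t => Real.log (f t)) θ = pderiv i f θ := by
  rw [pderiv, (hf.hasFDerivAt.log hf0).fderiv, smul_apply, smul_eq_mul,
    mul_inv_cancel_left₀ hf0, pderiv]

theorem pderiv_expct {X : Type*} [Fintype X] {p : (Fin m → ℝ) → X → ℝ}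
    (hp : ∀ x, DifferentiableAt ℝ (fun t => p t x) θ) (A : X → ℝ) (i : Fin m) :
    pderiv i (fun t => expct (p t) A) θ = ∑ x, pderiv i (fun t => p t x) θ * A x := by
  simp only [expct, pderiv]
  rw [fderiv_fun_sum fun x _ => (hp x).mul_const (A x), sum_apply]
  exact Finset.sum_congr rfl fun x _ => by
    rw [fderiv_mul_const (hp x), smul_apply, smul_eq_mul, mul_comm]

end PartialDerivatives

open Matrix

theorem Matrix.posSemidef_sub_inv_of_conjTranspose_mul_mul_eq_one
    {R X ι : Type*} [Field R] [PartialOrder R] [StarRing R] [StarOrderedRing R]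
    [Fintype X] [Fintype ι] [DecidableEq ι]
    {W : Matrix X X R} (hW : W.PosSemidef) (A S : Matrix X ι R)
    (hAS : Aᴴ * W * S = 1) (hS : (Sᴴ * W * S).PosDef) :
    (Aᴴ * W * A - (Sᴴ * W * S)⁻¹).PosSemidef := by
  have hSA : Sᴴ * W * A = 1 := by
    simpa only [conjTranspose_mul, conjTranspose_conjTranspose, hW.1.eq, conjTranspose_one,
      Matrix.mul_assoc] using congrArg conjTranspose hAS
  have hblocks : (fromCols A S)ᴴ * W * fromCols A S
      = fromBlocks (Aᴴ * W * A) 1 1ᴴ (Sᴴ * W * S) := by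
    rw [Matrix.mul_assoc, mul_fromCols, conjTranspose_fromCols_eq_fromRows_conjTranspose,
      fromRows_mul_fromCols, ← Matrix.mul_assoc, ← Matrix.mul_assoc, ← Matrix.mul_assoc,
      ← Matrix.mul_assoc, hAS, hSA, conjTranspose_one]
  have := hS.isUnit.invertible
  have hPSD := hW.conjTranspose_mul_mul_same (fromCols A S)
  rw [hblocks, PosDef.fromBlocks₂₂ _ _ hS] at hPSD
  simpa only [Matrix.one_mul, conjTranspose_one, Matrix.mul_one] using hPSD

theorem Matrix.transpose_mul_diagonal_mul_apply {R X ι κ : Type*} [CommSemiring R] [Fintype X]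
    [DecidableEq X] (A : Matrix X ι R) (P : X → R) (B : Matrix X κ R) (i : ι) (j : κ) :
    (Aᵀ * diagonal P * B) i j = ∑ x, P x * A x i * B x j := by
  rw [mul_apply]
  simp only [mul_diagonal, transpose_apply]
  exact Finset.sum_congr rfl fun x _ => by ring

section Estimation

variable {X : Type*} [Fintype X] [DecidableEq X] {k : ℕ}

def centered (A : X → Fin k → ℝ) (μ : Fin k → ℝ) : Matrix X (Fin k) ℝ :=
  of fun x i => A x i - μ i

theorem covMatrix_eq_centered (p : X → ℝ) (hp : ∑ x, p x = 1) {A : X → Fin k → ℝ}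
    {μ : Fin k → ℝ} (hμ : ∀ i, expct p (fun x => A x i) = μ i) :
    covMatrix p A = (centered A μ)ᵀ * diagonal p * centered A μ := by
  ext i j
  have hexpand : ∀ x, p x * (A x i - μ i) * (A x j - μ j)
      = p x * A x i * A x j - μ j * (p x * A x i) - μ i * (p x * A x j) + μ i * μ j * p x :=
    fun x => by ring
  simp only [expct] at hμ
  simp only [transpose_mul_diagonal_mul_apply, centered, of_apply, hexpand, covMatrix, covf,
    Finset.sum_add_distrib, Finset.sum_sub_distrib, ← Finset.mul_sum, hμ, hp]
  ring

def score (p : (Fin k → ℝ) → X → ℝ) (θ : Fin k → ℝ) : Matrix X (Fin k) ℝ :=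
  of fun x i => pderiv i (fun t => Real.log (p t x)) θ

theorem GeMat_eq_score (p : (Fin k → ℝ) → X → ℝ) (θ : Fin k → ℝ) :
    GeMat p θ = (score p θ)ᵀ * diagonal (p θ) * score p θ := by
  ext i j
  simp only [transpose_mul_diagonal_mul_apply, GeMat, score, of_apply]

theorem centered_transpose_mul_diagonal_mul_score {p : (Fin k → ℝ) → X → ℝ} {θ : Fin k → ℝ}
    (hdiff : ∀ x, DifferentiableAt ℝ (fun t => p t x) θ) (hpos : ∀ x, p θ x ≠ 0)
    (hsum : ∀ᶠ t in 𝓝 θ, ∑ x, p t x = 1) {est : X → Fin k → ℝ}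
    (hunb : ∀ᶠ t in 𝓝 θ, ∀ i, expct (p t) (fun x => est x i) = t i) :
    (centered est θ)ᵀ * diagonal (p θ) * score p θ = 1 := by
  ext i j
  have hnorm : ∑ x, pderiv j (fun t => p t x) θ = 0 := by
    have h : (fun t => expct (p t) fun _ => 1) =ᶠ[𝓝 θ] fun _ => 1 :=
      hsum.mono fun t ht => by simpa [expct] using ht
    simpa [pderiv_expct hdiff, pderiv_const] using h.pderiv_eq j
  have hmean :
      ∑ x, pderiv j (fun t => p t x) θ * est x i = (Pi.single j (1 : ℝ) : Fin k → ℝ) i := by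
    have h : (fun t => expct (p t) fun x => est x i) =ᶠ[𝓝 θ] fun t => t i :=
      hunb.mono fun t ht => ht i
    rw [← pderiv_coord, ← h.pderiv_eq, pderiv_expct hdiff]
  have hterm : ∀ x, p θ x * (est x i - θ i) * pderiv j (fun t => Real.log (p t x)) θ
      = pderiv j (fun t => p t x) θ * est x i - θ i * pderiv j (fun t => p t x) θ := fun x => by
    rw [← mul_pderiv_log (hdiff x) (hpos x)]
    ring
  calc ((centered est θ)ᵀ * diagonal (p θ) * score p θ) i j
      = (Pi.single j (1 : ℝ) : Fin k → ℝ) i - θ i * 0 := by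
        simp only [transpose_mul_diagonal_mul_apply, centered, score, of_apply, hterm,
          Finset.sum_sub_distrib, ← Finset.mul_sum, hmean, hnorm]
    _ = (1 : Matrix (Fin k) (Fin k) ℝ) i j := by simp [Pi.single_apply, one_apply]

end Estimation

/-- the deterministic Cramér–Rao inequality. -/
theorem deterministic_cramer_rao {X : Type*} [Fintype X] {k : ℕ}
    (Θ : Set (Fin k → ℝ)) (hΘ : IsOpen Θ)
    (p : (Fin k → ℝ) → X → ℝ)
    (hsmooth : ∀ x, ContDiffOn ℝ 1 (fun θ => p θ x) Θ)
    (hpos : ∀ θ ∈ Θ, ∀ x, 0 < p θ x)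
    (hsum : ∀ θ ∈ Θ, ∑ x, p θ x = 1)
    (hPD : ∀ θ ∈ Θ, (GeMat p θ).PosDef)
    (est : X → Fin k → ℝ)
    (hunb : ∀ θ ∈ Θ, ∀ i, expct (p θ) (fun x => est x i) = θ i) :
    ∀ θ ∈ Θ, (covMatrix (p θ) est - (GeMat p θ)⁻¹).PosSemidef := by
  classical
  intro θ hθ
  have hnhds : Θ ∈ 𝓝 θ := hΘ.mem_nhds hθ
  have hdiff : ∀ x, DifferentiableAt ℝ (fun t => p t x) θ := fun x =>
    ((hsmooth x).contDiffAt hnhds).differentiableAt one_ne_zero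
  have hcross := centered_transpose_mul_diagonal_mul_score hdiff (fun x => (hpos θ hθ x).ne')
    (Filter.eventually_of_mem hnhds hsum) (Filter.eventually_of_mem hnhds hunb)
  have hG := hPD θ hθ
  rw [GeMat_eq_score] at hG ⊢
  rw [covMatrix_eq_centered (p θ) (hsum θ hθ) (hunb θ hθ)]
  simp only [← conjTranspose_eq_transpose_of_trivial] at hcross hG ⊢
  exact posSemidef_sub_inv_of_conjTranspose_mul_mul_eq_one
    (posSemidef_diagonal_iff.2 fun x => (hpos θ hθ x).le) _ _ hcross hG
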